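/- Let H be the complex Hilbert space ℓ² over the index set {ℓ ∈ ℕ : ℓ ≥ 1}, with standard orthonormal basis (e_ℓ)_{ℓ ≥ 1}, and adopt the convention e₀ := 0. Set λ_ℓ = ℓ(ℓ+1) and a_ℓ = √( (ℓ+1)(ℓ−1) / ((2ℓ+1)(2ℓ−1)) ) for ℓ ≥ 1, and let T : H → H be a continuous linear map satisfying, for every ℓ ≥ 1, T e_ℓ = (1 − 6/λ_ℓ)·(a_ℓ·e_{ℓ−1} + a_{ℓ+1}·e_{ℓ+1}). Then for every t ∈ ℝ, exp(itT) e₁ = e₁ − (2it/√5)·e₂; consequently the family {exp(itT) : t ∈ ℝ} is not uniformly bounded in operator norm: for every M > 0 there exists t ∈ ℝ with ‖exp(itT)‖ > M. -/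

import Mathlib

/-!
Since `λ₂ = 6`, the factor `1 − 6/λ₂` kills `T e₂`, and with `e₀ = 0` we get `T e₁ = −(2/√5) e₂`.
So `T² e₁ = 0`: the exponential series applied to `e₁` stops after its linear term, and
`exp(itT) e₁ = e₁ + it T e₁` has norm growing linearly in `|t|`.
-/

open Complex

/-- The standard orthonormal basis vectors of `ℓ²({ℓ ∈ ℕ : ℓ ≥ 1}; ℂ)`, with the
convention `e₀ := 0`. -/
noncomputable def e (ℓ : ℕ) : lp (fun _ : {ℓ : ℕ // 1 ≤ ℓ} => ℂ) 2 :=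
  if h : 1 ≤ ℓ then lp.single 2 ⟨ℓ, h⟩ 1 else 0

/-- The eigenvalue `λ_ℓ = ℓ(ℓ+1)` of `−Δ` on the sphere. -/
noncomputable def lamCoef (ℓ : ℕ) : ℝ := (ℓ : ℝ) * ((ℓ : ℝ) + 1)

/-- The coefficient `a_ℓ = √((ℓ+1)(ℓ−1)/((2ℓ+1)(2ℓ−1)))` for `ℓ ≥ 1`. -/
noncomputable def aCoef (ℓ : ℕ) : ℝ :=
  Real.sqrt ((((ℓ : ℝ) + 1) * ((ℓ : ℝ) - 1)) / ((2 * (ℓ : ℝ) + 1) * (2 * (ℓ : ℝ) - 1)))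

section NilpotentExp

open Finset
open scoped Nat

variable {𝕜 E : Type*} [RCLike 𝕜] [NormedAddCommGroup E] [NormedSpace 𝕜 E] [CompleteSpace E]

theorem exp_apply_eq_sum_of_pow_apply_eq_zero (S : E →L[𝕜] E) {x : E} {k : ℕ}
    (hx : (S ^ k) x = 0) :
    NormedSpace.exp S x = ∑ n ∈ range k, (n ! : 𝕜)⁻¹ • (S ^ n) x := by
  have hvanish : ∀ n ∉ range k, (n ! : 𝕜)⁻¹ • (S ^ n) x = 0 := fun n hn => by
    rw [← Nat.sub_add_cancel (not_lt.1 (mem_range.not.1 hn)), pow_add, mul_apply_eq_comp, hx,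
      map_zero, smul_zero]
  rw [NormedSpace.exp_eq_tsum 𝕜]
  exact ((ContinuousLinearMap.apply 𝕜 E x).map_tsum (NormedSpace.expSeries_summable' S)).trans
    (tsum_eq_sum hvanish)

theorem exp_apply_eq_add_of_apply_apply_eq_zero (S : E →L[𝕜] E) {x : E} (hx : S (S x) = 0) :
    NormedSpace.exp S x = x + S x := by
  rw [exp_apply_eq_sum_of_pow_apply_eq_zero S (k := 2) (by rwa [sq, mul_apply_eq_comp])]
  simp [sum_range_succ]

end NilpotentExp

lemma e_zero : e 0 = 0 := dif_neg (by norm_num)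

lemma norm_e {ℓ : ℕ} (h : 1 ≤ ℓ) : ‖e ℓ‖ = 1 := by
  rw [e, dif_pos h, lp.norm_single (by norm_num), norm_one]

lemma lamCoef_one : lamCoef 1 = 2 := by norm_num [lamCoef]

lemma lamCoef_two : lamCoef 2 = 6 := by norm_num [lamCoef]

lemma aCoef_two : aCoef 2 = (Real.sqrt 5)⁻¹ := by norm_num [aCoef]

section MatrixOperator

variable {T : lp (fun _ : {ℓ : ℕ // 1 ≤ ℓ} => ℂ) 2 →L[ℂ] lp (fun _ : {ℓ : ℕ // 1 ≤ ℓ} => ℂ) 2}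
  (hT : ∀ ℓ : ℕ, 1 ≤ ℓ →
    T (e ℓ) = ((1 : ℂ) - 6 / (lamCoef ℓ : ℂ)) •
      ((aCoef ℓ : ℂ) • e (ℓ - 1) + (aCoef (ℓ + 1) : ℂ) • e (ℓ + 1)))
include hT

lemma apply_e_one_eq : T (e 1) = -(2 / (Real.sqrt 5 : ℂ)) • e 2 := by
  rw [hT 1 le_rfl, e_zero, smul_zero, zero_add, smul_smul, lamCoef_one, aCoef_two]
  congr 1
  push_cast
  ring

lemma apply_e_two_eq_zero : T (e 2) = 0 := by
  rw [hT 2 (by norm_num), lamCoef_two]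
  norm_num

end MatrixOperator

lemma norm_two_mul_I_mul_div_sqrt_five (t : ℝ) :
    ‖(2 * Complex.I * (t : ℂ)) / (Real.sqrt 5 : ℂ)‖ = 2 * |t| / Real.sqrt 5 := by
  simp [abs_of_nonneg (Real.sqrt_nonneg 5)]

/-- Equation (5.1.25): for the matrix operator
`T e_ℓ = (1 − 6/λ_ℓ)(a_ℓ e_{ℓ−1} + a_{ℓ+1} e_{ℓ+1})` (the representation of `M₁` at
`Ω = 0` for the zonal flow with stream function `cP₂(x₃)`),
`exp(itT) e₁ = e₁ − (2it/√5) e₂`, so `{exp(itT) : t ∈ ℝ}` is not uniformly bounded: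
a weak linear instability. -/
theorem exp_smul_not_uniformly_bounded_P2_V1
    (T : lp (fun _ : {ℓ : ℕ // 1 ≤ ℓ} => ℂ) 2 →L[ℂ] lp (fun _ : {ℓ : ℕ // 1 ≤ ℓ} => ℂ) 2)
    (hT : ∀ ℓ : ℕ, 1 ≤ ℓ →
      T (e ℓ) = ((1 : ℂ) - 6 / (lamCoef ℓ : ℂ)) •
        ((aCoef ℓ : ℂ) • e (ℓ - 1) + (aCoef (ℓ + 1) : ℂ) • e (ℓ + 1))) :
    (∀ t : ℝ, (NormedSpace.exp ((Complex.I * (t : ℂ)) • T)) (e 1) =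
        e 1 - ((2 * Complex.I * (t : ℂ)) / (Real.sqrt 5 : ℂ)) • e 2) ∧
    ∀ M : ℝ, 0 < M → ∃ t : ℝ, M < ‖NormedSpace.exp ((Complex.I * (t : ℂ)) • T)‖ := by
  have hexp (t : ℝ) : (NormedSpace.exp ((Complex.I * (t : ℂ)) • T)) (e 1) =
      e 1 - ((2 * Complex.I * (t : ℂ)) / (Real.sqrt 5 : ℂ)) • e 2 := by
    rw [exp_apply_eq_add_of_apply_apply_eq_zero _ (by simp [apply_e_one_eq hT,
      apply_e_two_eq_zero hT]), smul_apply, apply_e_one_eq hT, smul_smul,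
      sub_eq_add_neg, ← neg_smul]
    congr 2
    ring
  refine ⟨hexp, fun M hM => ⟨Real.sqrt 5 * (M + 2) / 2, ?_⟩⟩
  set c := (2 * Complex.I * ((Real.sqrt 5 * (M + 2) / 2 : ℝ) : ℂ)) / (Real.sqrt 5 : ℂ)
  have hc : ‖c‖ = M + 2 := by
    rw [norm_two_mul_I_mul_div_sqrt_five, abs_of_pos (by positivity)]
    field_simp
  calc M < ‖c • e 2‖ - ‖e 1‖ := by rw [norm_smul, hc, norm_e le_rfl, norm_e one_le_two]; linarith
    _ ≤ ‖e 1 - c • e 2‖ := by rw [norm_sub_rev]; exact norm_sub_norm_le _ _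
    _ ≤ _ := by rw [← hexp]; exact ContinuousLinearMap.unit_le_opNorm _ _ (norm_e le_rfl).le
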